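/- arXiv:2603.21952 — 4 statements merged into one kernel-verified Lean document; each statement's English description precedes it below -/
import Mathlib

section
/- Let ν_max denote the largest eigenvalue of the symmetric positive semidefinite matrix XᵀX. If δ ≥ ν_max/(8n), then for every fixed (β₀, β) ∈ ℝ × ℝ^p and every λ ≥ 0, the map t ↦ h_{δ,λ}(t, β₀, β) is concave on [0,1]^p. -/
/-! The function `u ↦ u ^ 2 / 8 - log (1 + exp u)` is convex: the second derivative of
`log (1 + exp u)` is `σ (1 - σ) ≤ 1 / 4`, with `σ` the sigmoid. Applied to the linear predictors
`β₀ + ⟨x_i, w⟩` and combined with `‖X w‖² ≤ ν_max ‖w‖²`, this makes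
`w ↦ ν_max / (8 n) ‖w‖² - L(β₀, w)` convex. Taking `w = t ⊙ β`, the penalty
`-δ Σ_j t_j² β_j²` absorbs the concavity defect of `t ↦ L(β₀, t ⊙ β)` as soon as
`δ ≥ ν_max / (8 n)`, so `h` is concave in `t` on all of `ℝ^p`. -/

/-- Logistic negative log-likelihood
`L(β₀, β) = (1/n) Σ_i [log(1 + exp(β₀ + ⟨x_i, β⟩)) − y_i (β₀ + ⟨x_i, β⟩)]`. -/
noncomputable def negLogLik (n p : ℕ) (X : Matrix (Fin n) (Fin p) ℝ) (y : Fin n → ℝ)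
    (β0 : ℝ) (β : Fin p → ℝ) : ℝ :=
  (1 / (n : ℝ)) * ∑ i, (Real.log (1 + Real.exp (β0 + ∑ j, X i j * β j))
      - y i * (β0 + ∑ j, X i j * β j))

/-- Relaxed objective
`h_{δ,λ}(t, β₀, β) = L(β₀, t ⊙ β) + λ‖β‖₂² + δ Σ_j (1 − t_j²) β_j²`. -/
noncomputable def hObj (n p : ℕ) (X : Matrix (Fin n) (Fin p) ℝ) (y : Fin n → ℝ)
    (δ lam : ℝ) (t : Fin p → ℝ) (β0 : ℝ) (β : Fin p → ℝ) : ℝ :=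
  negLogLik n p X y β0 (fun j => t j * β j) + lam * ∑ j, (β j) ^ 2
    + δ * ∑ j, (1 - (t j) ^ 2) * (β j) ^ 2

/-- Value function `f_{δ,λ}(t) = inf_{(β₀,β)} h_{δ,λ}(t, β₀, β)`. -/
noncomputable def fVal (n p : ℕ) (X : Matrix (Fin n) (Fin p) ℝ) (y : Fin n → ℝ)
    (δ lam : ℝ) (t : Fin p → ℝ) : ℝ :=
  ⨅ b : ℝ × (Fin p → ℝ), hObj n p X y δ lam t b.1 b.2

open Real Matrix

lemma hasDerivAt_log_one_add_exp (u : ℝ) :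
    HasDerivAt (fun u => log (1 + exp u)) (sigmoid u) u := by
  convert ((hasDerivAt_exp u).const_add 1).log (by positivity) using 1
  rw [sigmoid_def, exp_neg]
  field_simp
  ring

lemma convexOn_sq_div_eight_sub_log_one_add_exp :
    ConvexOn ℝ Set.univ (fun u : ℝ => u ^ 2 / 8 - log (1 + exp u)) := by
  have hf' (u : ℝ) :
      HasDerivAt (fun u : ℝ => u ^ 2 / 8 - log (1 + exp u)) (u / 4 - sigmoid u) u :=
    (((hasDerivAt_pow 2 u).div_const 8).sub (hasDerivAt_log_one_add_exp u)).congr_deriv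
      (by push_cast; ring)
  have hf'' (u : ℝ) :
      HasDerivAt (fun u : ℝ => u / 4 - sigmoid u) ((sigmoid u - 1 / 2) ^ 2) u :=
    (((hasDerivAt_id u).div_const 4).sub (hasDerivAt_sigmoid u)).congr_deriv (by simp; ring)
  refine Monotone.convexOn_univ_of_deriv (fun u => (hf' u).differentiableAt) ?_
  rw [funext fun u => (hf' u).deriv]
  exact monotone_of_hasDerivAt_nonneg hf'' fun u => sq_nonneg _

lemma log_one_add_exp_convex_combination_le {a b : ℝ} (ha : 0 ≤ a) (hb : 0 ≤ b) (hab : a + b = 1)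
    (u v : ℝ) :
    a * log (1 + exp u) + b * log (1 + exp v)
      ≤ log (1 + exp (a * u + b * v)) + a * b / 8 * (u - v) ^ 2 := by
  have h := convexOn_sq_div_eight_sub_log_one_add_exp.2 (Set.mem_univ u) (Set.mem_univ v) ha hb hab
  simp only [smul_eq_mul] at h
  obtain rfl : b = 1 - a := by linarith
  linear_combination h

lemma Matrix.IsHermitian.dotProduct_mulVec_le_iSup_eigenvalues {ι : Type*} [Fintype ι]
    [DecidableEq ι] {A : Matrix ι ι ℝ} (hA : A.IsHermitian) (w : ι → ℝ) :
    w ⬝ᵥ (A *ᵥ w) ≤ (⨆ i, hA.eigenvalues i) * (w ⬝ᵥ w) := by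
  set U : Matrix ι ι ℝ := ↑hA.eigenvectorUnitary
  have hUUt : U * Uᵀ = 1 := by
    simpa [star_eq_conjTranspose] using mem_unitaryGroup_iff.mp hA.eigenvectorUnitary.2
  have hquad : w ⬝ᵥ (A *ᵥ w) = ∑ k, hA.eigenvalues k * (Uᵀ *ᵥ w) k ^ 2 := by
    conv_lhs => rw [hA.spectral_theorem, Unitary.conjStarAlgAut_apply]
    rw [← mulVec_mulVec, ← mulVec_mulVec, dotProduct_mulVec, ← mulVec_transpose]
    simp [dotProduct, mulVec_diagonal, sq, star_eq_conjTranspose, mul_left_comm, U]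
  have hnorm : w ⬝ᵥ w = ∑ k, (Uᵀ *ᵥ w) k ^ 2 := by
    have h : (Uᵀ *ᵥ w) ⬝ᵥ (Uᵀ *ᵥ w) = w ⬝ᵥ w := by
      rw [dotProduct_mulVec, vecMul_transpose, mulVec_mulVec, hUUt, one_mulVec]
    simpa [dotProduct, sq] using h.symm
  have hbdd : BddAbove (Set.range hA.eigenvalues) := (Set.finite_range _).bddAbove
  rw [hquad, hnorm, Finset.mul_sum]
  exact Finset.sum_le_sum fun k _ => mul_le_mul_of_nonneg_right (le_ciSup hbdd k) (sq_nonneg _)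

lemma sum_sq_mulVec_le_iSup_eigenvalues {m ι : Type*} [Fintype m] [Fintype ι] [DecidableEq ι]
    (X : Matrix m ι ℝ) (hH : (Xᵀ * X).IsHermitian) (w : ι → ℝ) :
    ∑ i, (X *ᵥ w) i ^ 2 ≤ (⨆ i, hH.eigenvalues i) * ∑ j, w j ^ 2 := by
  have h := hH.dotProduct_mulVec_le_iSup_eigenvalues w
  rw [← mulVec_mulVec, dotProduct_mulVec, vecMul_transpose] at h
  simpa [dotProduct, sq] using h

lemma negLogLik_convex_combination_le {n p : ℕ} (X : Matrix (Fin n) (Fin p) ℝ)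
    (hH : (Xᵀ * X).IsHermitian) (y : Fin n → ℝ) (β0 : ℝ) {a b : ℝ} (ha : 0 ≤ a) (hb : 0 ≤ b)
    (hab : a + b = 1) (w w' : Fin p → ℝ) :
    a * negLogLik n p X y β0 w + b * negLogLik n p X y β0 w'
      ≤ negLogLik n p X y β0 (a • w + b • w')
        + (⨆ i, hH.eigenvalues i) / (8 * n) * (a * b * ∑ j, (w j - w' j) ^ 2) := by
  have hlin (v : Fin p → ℝ) (i : Fin n) : β0 + ∑ j, X i j * v j = β0 + (X *ᵥ v) i := rfl
  have hcomb (i : Fin n) : β0 + (X *ᵥ (a • w + b • w')) i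
      = a * (β0 + (X *ᵥ w) i) + b * (β0 + (X *ᵥ w') i) := by
    simp only [mulVec_add, mulVec_smul, Pi.add_apply, Pi.smul_apply, smul_eq_mul]
    linear_combination β0 * hab.symm
  have hdiff (i : Fin n) : (β0 + (X *ᵥ w) i) - (β0 + (X *ᵥ w') i) = (X *ᵥ (w - w')) i := by
    simp [mulVec_sub]
  have hpoint (i : Fin n) :
      a * (log (1 + exp (β0 + (X *ᵥ w) i)) - y i * (β0 + (X *ᵥ w) i))
        + b * (log (1 + exp (β0 + (X *ᵥ w') i)) - y i * (β0 + (X *ᵥ w') i))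
      ≤ log (1 + exp (β0 + (X *ᵥ (a • w + b • w')) i))
          - y i * (β0 + (X *ᵥ (a • w + b • w')) i) + a * b / 8 * (X *ᵥ (w - w')) i ^ 2 := by
    rw [hcomb, ← hdiff]
    linear_combination
      log_one_add_exp_convex_combination_le ha hb hab (β0 + (X *ᵥ w) i) (β0 + (X *ᵥ w') i)
  have hsum := Finset.sum_le_sum (s := Finset.univ) fun i _ => hpoint i
  rw [Finset.sum_add_distrib, Finset.sum_add_distrib, ← Finset.mul_sum, ← Finset.mul_sum,
    ← Finset.mul_sum] at hsum
  have hquad := mul_le_mul_of_nonneg_left (sum_sq_mulVec_le_iSup_eigenvalues X hH (w - w'))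
    (by positivity : 0 ≤ a * b / 8)
  have hinv : 0 ≤ 1 / (n : ℝ) := by positivity
  simp only [negLogLik, hlin, Pi.sub_apply] at hquad ⊢
  linear_combination mul_le_mul_of_nonneg_left (hsum.trans (add_le_add_right hquad _)) hinv

lemma concaveOn_univ_hObj {n p : ℕ} (X : Matrix (Fin n) (Fin p) ℝ) (y : Fin n → ℝ)
    (hH : (Xᵀ * X).IsHermitian) {δ : ℝ} (hδ : (⨆ i, hH.eigenvalues i) / (8 * (n : ℝ)) ≤ δ)
    (lam β0 : ℝ) (β : Fin p → ℝ) :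
    ConcaveOn ℝ Set.univ (fun t => hObj n p X y δ lam t β0 β) := by
  refine ⟨convex_univ, fun x _ z _ a b ha hb hab => ?_⟩
  have hprod : (fun j => (a • x + b • z) j * β j)
      = a • (fun j => x j * β j) + b • (fun j => z j * β j) := by
    ext j
    simp only [Pi.add_apply, Pi.smul_apply, smul_eq_mul]
    ring
  have hpenalty : ∑ j, (1 - (a • x + b • z) j ^ 2) * β j ^ 2
      = a * ∑ j, (1 - x j ^ 2) * β j ^ 2 + b * ∑ j, (1 - z j ^ 2) * β j ^ 2
        + a * b * ∑ j, (x j * β j - z j * β j) ^ 2 := by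
    simp only [Finset.mul_sum, ← Finset.sum_add_distrib]
    refine Finset.sum_congr rfl fun j _ => ?_
    simp only [Pi.add_apply, Pi.smul_apply, smul_eq_mul]
    obtain rfl : b = 1 - a := by linarith
    ring
  have hW : 0 ≤ a * b * ∑ j, (x j * β j - z j * β j) ^ 2 := by positivity
  simp only [hObj, smul_eq_mul, hprod, hpenalty]
  linear_combination negLogLik_convex_combination_le X hH y β0 ha hb hab
    (fun j => x j * β j) (fun j => z j * β j) + mul_le_mul_of_nonneg_right hδ hW
    + (lam * ∑ j, β j ^ 2) * hab

open Matrix in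
theorem stmt2_general (n p : ℕ)
    (X : Matrix (Fin n) (Fin p) ℝ) (y : Fin n → ℝ)
    (hH : (Xᵀ * X).IsHermitian)
    (δ : ℝ) (hδ : (⨆ i, hH.eigenvalues i) / (8 * (n : ℝ)) ≤ δ)
    (lam : ℝ)
    (β0 : ℝ) (β : Fin p → ℝ) :
    ConcaveOn ℝ {t : Fin p → ℝ | ∀ j, 0 ≤ t j ∧ t j ≤ 1}
      (fun t => hObj n p X y δ lam t β0 β) := by
  have hbox : {t : Fin p → ℝ | ∀ j, 0 ≤ t j ∧ t j ≤ 1} = Set.Icc 0 1 := by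
    ext t
    simp [Pi.le_def, forall_and]
  rw [hbox]
  exact (concaveOn_univ_hObj X y hH hδ lam β0 β).subset (Set.subset_univ _) (convex_Icc 0 1)

open Matrix in
/-- if `δ ≥ ν_max/(8n)`, where `ν_max` is the largest eigenvalue of the
symmetric positive semidefinite matrix `XᵀX`, then for every fixed `(β₀, β)` and every
`λ ≥ 0`, the map `t ↦ h_{δ,λ}(t, β₀, β)` is concave on `[0,1]^p`. -/
theorem stmt2 (n p : ℕ) (hn : 1 ≤ n) (hp : 1 ≤ p)
    (X : Matrix (Fin n) (Fin p) ℝ) (y : Fin n → ℝ) (hy : ∀ i, y i = 0 ∨ y i = 1)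
    (hH : (Xᵀ * X).IsHermitian)
    (δ : ℝ) (hδ : (⨆ i, hH.eigenvalues i) / (8 * (n : ℝ)) ≤ δ)
    (lam : ℝ) (hlam : 0 ≤ lam)
    (β0 : ℝ) (β : Fin p → ℝ) :
    ConcaveOn ℝ {t : Fin p → ℝ | ∀ j, 0 ≤ t j ∧ t j ≤ 1}
      (fun t => hObj n p X y δ lam t β0 β) :=
  stmt2_general n p X y hH δ hδ lam β0 β
end

section
/- Let ν_max denote the largest eigenvalue of XᵀX. If δ ≥ ν_max/(8n), then for every λ ≥ 0 the value function f_{δ,λ}(t) = inf_{(β₀,β)} h_{δ,λ}(t, β₀, β) is concave on [0,1]^p. -/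
/-! For fixed `(β₀, β)` the map `t ↦ h(t, β₀, β)` is concave on all of `ℝᵖ`. Indeed
`log (1 + eᶻ) - z² / 8` is concave, so along a direction `d` the loss `L(β₀, t ⊙ β)` has second
derivative at most `‖X (d ⊙ β)‖² / (4n) ≤ ν_max ‖d ⊙ β‖² / (4n)`, while the penalty
`δ ∑ (1 - t_j²) β_j²` contributes `-2δ ‖d ⊙ β‖²`. On the box `[0,1]ᵖ` every `h` is nonnegative,
so `f` is the infimum of a family of concave functions that is bounded below, hence concave. -/

open Finset Matrix

namespace Real

lemma hasDerivAt_log_one_add_exp (z : ℝ) :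
    HasDerivAt (fun z => log (1 + exp z)) (sigmoid z) z := by
  convert ((hasDerivAt_exp z).const_add 1).log (by positivity) using 1
  rw [sigmoid_def, exp_neg]
  field_simp
  ring

/-- The second derivative of `log (1 + exp z)` is `σ (1 - σ) ≤ 1 / 4`. -/
lemma concaveOn_log_one_add_exp_sub_sq :
    ConcaveOn ℝ Set.univ fun z => log (1 + exp z) - z ^ 2 / 8 := by
  have hderiv : ∀ z, HasDerivAt (fun z => log (1 + exp z) - z ^ 2 / 8) (sigmoid z - z / 4) z :=
    fun z => (hasDerivAt_log_one_add_exp z).sub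
      (((hasDerivAt_pow 2 z).div_const 8).congr_deriv (by ring))
  have hderiv2 : ∀ z, HasDerivAt (fun z => sigmoid z - z / 4)
      (sigmoid z * (1 - sigmoid z) - 1 / 4) z :=
    fun z => (hasDerivAt_sigmoid z).sub ((hasDerivAt_id z).div_const 4)
  have hd : deriv (fun z => log (1 + exp z) - z ^ 2 / 8) = fun z => sigmoid z - z / 4 :=
    funext fun z => (hderiv z).deriv
  refine concaveOn_univ_of_deriv2_nonpos (fun z => (hderiv z).differentiableAt)
    (hd ▸ fun z => (hderiv2 z).differentiableAt) fun z => ?_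
  rw [Function.iterate_succ_apply, Function.iterate_one, hd, (hderiv2 z).deriv]
  nlinarith [sq_nonneg (sigmoid z - 1 / 2)]

lemma logisticLoss_convexComb_le (y α γ : ℝ) {a b : ℝ} (ha : 0 ≤ a) (hb : 0 ≤ b)
    (hab : a + b = 1) :
    a * (log (1 + exp α) - y * α) + b * (log (1 + exp γ) - y * γ)
      ≤ log (1 + exp (a * α + b * γ)) - y * (a * α + b * γ) + a * b / 8 * (α - γ) ^ 2 := by
  have hψ := concaveOn_log_one_add_exp_sub_sq.2 (Set.mem_univ α) (Set.mem_univ γ) ha hb hab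
  simp only [smul_eq_mul] at hψ
  obtain rfl : b = 1 - a := by linarith
  linarith

lemma mul_le_log_one_add_exp {y : ℝ} (hy : y ∈ Set.Icc 0 1) (z : ℝ) : y * z ≤ log (1 + exp z) := by
  have h0 : 0 ≤ log (1 + exp z) := log_nonneg (by linarith [exp_pos z])
  have h1 : z ≤ log (1 + exp z) := by
    rw [le_log_iff_exp_le (by positivity)]
    linarith
  linarith [mul_le_mul_of_nonneg_left h1 hy.1, mul_le_mul_of_nonneg_left h0 (sub_nonneg.2 hy.2)]

end Real

open Real

namespace Matrix.IsHermitian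

variable {ι : Type*} [Fintype ι] [DecidableEq ι] {A : Matrix ι ι ℝ}

open MatrixOrder in
lemma dotProduct_mulVec_le (hA : A.IsHermitian) {r : ℝ} (hr : ∀ i, hA.eigenvalues i ≤ r)
    (v : ι → ℝ) : v ⬝ᵥ A *ᵥ v ≤ r * (v ⬝ᵥ v) := by
  have hle : A ≤ algebraMap ℝ _ r := by
    refine le_algebraMap_of_spectrum_le ?_ hA
    rw [hA.spectrum_real_eq_range_eigenvalues]
    rintro _ ⟨i, rfl⟩
    exact hr i
  have := (Matrix.le_iff.1 hle).dotProduct_mulVec_nonneg v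
  simpa only [star_trivial, Algebra.algebraMap_eq_smul_one, sub_mulVec, smul_mulVec, one_mulVec,
    dotProduct_sub, dotProduct_smul, smul_eq_mul, sub_nonneg] using this

end Matrix.IsHermitian

section Gram

variable {n p : ℕ} (X : Matrix (Fin n) (Fin p) ℝ)

lemma sum_sq_le_iSup_eigenvalues_mul (hH : (Xᵀ * X).IsHermitian) (v : Fin p → ℝ) :
    ∑ i, (∑ j, X i j * v j) ^ 2 ≤ (⨆ k, hH.eigenvalues k) * ∑ j, v j ^ 2 := by
  have h := hH.dotProduct_mulVec_le (fun k => le_ciSup (Set.finite_range _).bddAbove k) v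
  rw [← mulVec_mulVec, dotProduct_mulVec, vecMul_transpose] at h
  simpa [dotProduct, mulVec, sq] using h

lemma eigenvalues_transpose_mul_self_nonneg (hH : (Xᵀ * X).IsHermitian) (k : Fin p) :
    0 ≤ hH.eigenvalues k := by
  have h := posSemidef_conjTranspose_mul_self X
  rw [conjTranspose_eq_transpose_of_trivial] at h
  exact h.eigenvalues_nonneg k

end Gram

theorem ConcaveOn.ciInf {E ι : Type*} [AddCommMonoid E] [Module ℝ E] [Nonempty ι] {s : Set E}
    {f : ι → E → ℝ} (hs : Convex ℝ s) (hf : ∀ i, ConcaveOn ℝ s (f i))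
    (hbdd : ∀ x ∈ s, BddBelow (Set.range fun i => f i x)) :
    ConcaveOn ℝ s fun x => ⨅ i, f i x :=
  ⟨hs, fun x hx z hz _ _ ha hb hab => le_ciInf fun i =>
    (add_le_add (smul_le_smul_of_nonneg_left (ciInf_le (hbdd x hx) i) ha)
      (smul_le_smul_of_nonneg_left (ciInf_le (hbdd z hz) i) hb)).trans ((hf i).2 hx hz ha hb hab)⟩

section Logistic

variable {n p : ℕ} (X : Matrix (Fin n) (Fin p) ℝ) (y : Fin n → ℝ)

lemma negLogLik_nonneg (hy : ∀ i, y i ∈ Set.Icc 0 1) (β0 : ℝ) (β : Fin p → ℝ) :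
    0 ≤ negLogLik n p X y β0 β :=
  mul_nonneg (by positivity) <| sum_nonneg fun i _ => sub_nonneg.2 (mul_le_log_one_add_exp (hy i) _)

lemma negLogLik_convexComb_le (β0 : ℝ) (u w : Fin p → ℝ) {a b : ℝ} (ha : 0 ≤ a) (hb : 0 ≤ b)
    (hab : a + b = 1) :
    a * negLogLik n p X y β0 u + b * negLogLik n p X y β0 w
      ≤ negLogLik n p X y β0 (a • u + b • w)
        + a * b / (8 * n) * ∑ i, (∑ j, X i j * (u j - w j)) ^ 2 := by
  have hmix : ∀ i, β0 + ∑ j, X i j * (a • u + b • w) j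
      = a * (β0 + ∑ j, X i j * u j) + b * (β0 + ∑ j, X i j * w j) := fun i => by
    have hsum : ∑ j, X i j * (a • u + b • w) j = a * ∑ j, X i j * u j + b * ∑ j, X i j * w j := by
      simp only [Pi.add_apply, Pi.smul_apply, smul_eq_mul, mul_sum, ← sum_add_distrib]
      exact sum_congr rfl fun j _ => by ring
    rw [hsum]
    linear_combination -β0 * hab
  have hdiff : ∀ i, ∑ j, X i j * (u j - w j)
      = (β0 + ∑ j, X i j * u j) - (β0 + ∑ j, X i j * w j) := fun i => by
    simp only [mul_sub, sum_sub_distrib]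
    ring
  have hterms := sum_le_sum fun i (_ : i ∈ univ) =>
    logisticLoss_convexComb_le (y i) (β0 + ∑ j, X i j * u j) (β0 + ∑ j, X i j * w j) ha hb hab
  simp only [sum_add_distrib, ← mul_sum] at hterms
  unfold negLogLik
  simp only [hmix, hdiff]
  calc _ = 1 / (n : ℝ) * (a * _ + b * _) := by ring
    _ ≤ 1 / (n : ℝ) * (_ + a * b / 8 * _) := mul_le_mul_of_nonneg_left hterms (by positivity)
    _ = _ := by ring

lemma concaveOn_hObj {δ : ℝ} (lam : ℝ)
    (hX : ∀ v : Fin p → ℝ, (∑ i, (∑ j, X i j * v j) ^ 2) / (8 * n) ≤ δ * ∑ j, v j ^ 2)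
    (β0 : ℝ) (β : Fin p → ℝ) :
    ConcaveOn ℝ Set.univ fun t => hObj n p X y δ lam t β0 β := by
  refine ⟨convex_univ, fun t _ s _ a b ha hb hab => ?_⟩
  set u : Fin p → ℝ := fun j => t j * β j
  set w : Fin p → ℝ := fun j => s j * β j
  have hmix : (fun j => (a • t + b • s) j * β j) = a • u + b • w := by
    ext j
    simp only [u, w, Pi.add_apply, Pi.smul_apply, smul_eq_mul]
    ring
  have hpen : ∑ j, (1 - (a • t + b • s) j ^ 2) * β j ^ 2
      = a * ∑ j, (1 - t j ^ 2) * β j ^ 2 + b * ∑ j, (1 - s j ^ 2) * β j ^ 2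
        + a * b * ∑ j, (u j - w j) ^ 2 := by
    obtain rfl : b = 1 - a := by linarith
    simp only [mul_sum, ← sum_add_distrib]
    refine sum_congr rfl fun j _ => ?_
    simp only [u, w, Pi.add_apply, Pi.smul_apply, smul_eq_mul]
    ring
  have hloss := negLogLik_convexComb_le X y β0 u w ha hb hab
  have hcurv := mul_le_mul_of_nonneg_left (hX (u - w)) (mul_nonneg ha hb)
  simp only [Pi.sub_apply] at hcurv
  simp only [hObj, smul_eq_mul, hmix, hpen]
  have hcoef : a * b / (8 * n) * ∑ i, (∑ j, X i j * (u j - w j)) ^ 2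
      = a * b * ((∑ i, (∑ j, X i j * (u j - w j)) ^ 2) / (8 * n)) := by ring
  obtain rfl : b = 1 - a := by linarith
  linarith

lemma hObj_nonneg (hy : ∀ i, y i ∈ Set.Icc 0 1) {δ lam : ℝ} (hδ : 0 ≤ δ) (hlam : 0 ≤ lam)
    {t : Fin p → ℝ} (ht : ∀ j, t j ^ 2 ≤ 1) (β0 : ℝ) (β : Fin p → ℝ) :
    0 ≤ hObj n p X y δ lam t β0 β := by
  have hpen : 0 ≤ ∑ j, (1 - t j ^ 2) * β j ^ 2 :=
    sum_nonneg fun j _ => mul_nonneg (sub_nonneg.2 (ht j)) (sq_nonneg _)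
  unfold hObj
  have := negLogLik_nonneg X y hy β0 fun j => t j * β j
  positivity

end Logistic

open Matrix in
theorem stmt3_general (n p : ℕ)
    (X : Matrix (Fin n) (Fin p) ℝ) (y : Fin n → ℝ) (hy : ∀ i, y i = 0 ∨ y i = 1)
    (hH : (Xᵀ * X).IsHermitian)
    (δ : ℝ) (hδ : (⨆ i, hH.eigenvalues i) / (8 * (n : ℝ)) ≤ δ)
    (lam : ℝ) (hlam : 0 ≤ lam) :
    ConcaveOn ℝ {t : Fin p → ℝ | ∀ j, 0 ≤ t j ∧ t j ≤ 1}
      (fun t => fVal n p X y δ lam t) := by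
  set ν := ⨆ i, hH.eigenvalues i
  have hδ0 : 0 ≤ δ :=
    (div_nonneg (iSup_nonneg (eigenvalues_transpose_mul_self_nonneg X hH)) (by positivity)).trans hδ
  have hX (v : Fin p → ℝ) : (∑ i, (∑ j, X i j * v j) ^ 2) / (8 * n) ≤ δ * ∑ j, v j ^ 2 :=
    calc _ ≤ ν * (∑ j, v j ^ 2) / (8 * n) :=
          div_le_div_of_nonneg_right (sum_sq_le_iSup_eigenvalues_mul X hH v) (by positivity)
      _ = ν / (8 * n) * ∑ j, v j ^ 2 := by ring
      _ ≤ δ * ∑ j, v j ^ 2 := mul_le_mul_of_nonneg_right hδ (by positivity)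
  have hy' (i : Fin n) : y i ∈ Set.Icc 0 1 := by rcases hy i with h | h <;> simp [h]
  have hbox : Convex ℝ {t : Fin p → ℝ | ∀ j, 0 ≤ t j ∧ t j ≤ 1} := by
    have : {t : Fin p → ℝ | ∀ j, 0 ≤ t j ∧ t j ≤ 1} = Set.Icc 0 1 := by
      ext t
      simp only [Set.mem_ofPred_eq, Set.mem_Icc, Pi.le_def, Pi.zero_apply, Pi.one_apply, forall_and]
    exact this ▸ convex_Icc 0 1
  refine ConcaveOn.ciInf hbox (fun b => (concaveOn_hObj X y lam hX b.1 b.2).subset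
    (Set.subset_univ _) hbox) fun t ht => ⟨0, ?_⟩
  rintro _ ⟨b, rfl⟩
  exact hObj_nonneg X y hy' hδ0 hlam (fun j => pow_le_one₀ (ht j).1 (ht j).2) b.1 b.2

open Matrix in
/-- if `δ ≥ ν_max/(8n)`, where `ν_max` is the largest eigenvalue of `XᵀX`,
then for every `λ ≥ 0` the value function `f_{δ,λ}` is concave on `[0,1]^p`. -/
theorem stmt3 (n p : ℕ) (hn : 1 ≤ n) (hp : 1 ≤ p)
    (X : Matrix (Fin n) (Fin p) ℝ) (y : Fin n → ℝ) (hy : ∀ i, y i = 0 ∨ y i = 1)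
    (hH : (Xᵀ * X).IsHermitian)
    (δ : ℝ) (hδ : (⨆ i, hH.eigenvalues i) / (8 * (n : ℝ)) ≤ δ)
    (lam : ℝ) (hlam : 0 ≤ lam) :
    ConcaveOn ℝ {t : Fin p → ℝ | ∀ j, 0 ≤ t j ∧ t j ≤ 1}
      (fun t => fVal n p X y δ lam t) :=
  stmt3_general n p X y hy hH δ hδ lam hlam
end

section
/- Suppose the binary response is not constant, i.e., there exist indices i, i' with y_i = 1 and y_{i'} = 0. Then for every interior point t ∈ (0,1)^p, every δ > 0 and λ ≥ 0, the function (β₀, β) ↦ h_{δ,λ}(t, β₀, β) attains its infimum over ℝ × ℝ^p; that is, there exists (β̃₀, β̃) with h_{δ,λ}(t, β̃₀, β̃) = f_{δ,λ}(t). -/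
open Finset Filter Real

noncomputable def logisticLoss (y u : ℝ) : ℝ := log (1 + exp u) - y * u

lemma log_one_add_exp_nonneg (u : ℝ) : 0 ≤ log (1 + exp u) :=
  log_nonneg (le_add_of_nonneg_right (exp_pos u).le)

lemma le_log_one_add_exp (u : ℝ) : u ≤ log (1 + exp u) := by
  simpa using log_le_log (exp_pos u) (le_add_of_nonneg_left zero_le_one)

lemma logisticLoss_nonneg {y : ℝ} (hy : y = 0 ∨ y = 1) (u : ℝ) : 0 ≤ logisticLoss y u := by
  rcases hy with rfl | rfl
  · simpa [logisticLoss] using log_one_add_exp_nonneg u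
  · simpa [logisticLoss] using le_log_one_add_exp u

lemma le_logisticLoss_zero (u : ℝ) : u ≤ logisticLoss 0 u := by
  simpa [logisticLoss] using le_log_one_add_exp u

lemma neg_le_logisticLoss_one (u : ℝ) : -u ≤ logisticLoss 1 u := by
  simpa [logisticLoss] using log_one_add_exp_nonneg u

lemma negLogLik_eq_sum_logisticLoss (n p : ℕ) (X : Matrix (Fin n) (Fin p) ℝ) (y : Fin n → ℝ)
    (β0 : ℝ) (β : Fin p → ℝ) :
    negLogLik n p X y β0 β = (∑ i, logisticLoss (y i) (β0 + ∑ j, X i j * β j)) / n := by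
  rw [negLogLik, one_div_mul_eq_div]
  rfl

lemma abs_sum_mul_le_sum_abs_mul_norm {ι : Type*} [Fintype ι] (a β : ι → ℝ) :
    |∑ j, a j * β j| ≤ (∑ j, |a j|) * ‖β‖ := by
  rw [sum_mul]
  refine (abs_sum_le_sum_abs _ _).trans (sum_le_sum fun j _ => ?_)
  rw [abs_mul]
  exact mul_le_mul_of_nonneg_left (norm_le_pi_norm β j) (abs_nonneg _)

lemma norm_sq_le_sum_sq {ι : Type*} [Fintype ι] (β : ι → ℝ) : ‖β‖ ^ 2 ≤ ∑ j, β j ^ 2 := by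
  have hS : 0 ≤ ∑ j, β j ^ 2 := sum_nonneg fun j _ => sq_nonneg _
  refine ((le_sqrt (norm_nonneg β) hS).1 ((pi_norm_le_iff_of_nonneg (sqrt_nonneg _)).2
    fun j => abs_le_sqrt ?_))
  exact single_le_sum (fun j _ => sq_nonneg (β j)) (mem_univ j)

lemma norm_mul_le_of_abs_le_one {ι : Type*} [Fintype ι] {t : ι → ℝ} (ht : ∀ j, |t j| ≤ 1)
    (β : ι → ℝ) : ‖fun j => t j * β j‖ ≤ ‖β‖ :=
  (pi_norm_le_iff_of_nonneg (norm_nonneg β)).2 fun j => by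
    rw [norm_mul, ← one_mul ‖β‖]
    exact mul_le_mul (ht j) (norm_le_pi_norm β j) (norm_nonneg _) zero_le_one

lemma abs_sub_mul_norm_div_le_negLogLik {n p : ℕ} (X : Matrix (Fin n) (Fin p) ℝ)
    {y : Fin n → ℝ} (hy : ∀ i, y i = 0 ∨ y i = 1) {i₁ i₀ : Fin n} (hi₁ : y i₁ = 1)
    (hi₀ : y i₀ = 0) (β0 : ℝ) (β : Fin p → ℝ) :
    (|β0| - (∑ j, (|X i₁ j| + |X i₀ j|)) * ‖β‖) / n ≤ negLogLik n p X y β0 β := by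
  have hne : i₁ ≠ i₀ := fun h => by simp [h, hi₀] at hi₁
  set u : Fin n → ℝ := fun i => β0 + ∑ j, X i j * β j
  have hpair :
      logisticLoss 1 (u i₁) + logisticLoss 0 (u i₀) ≤ ∑ i, logisticLoss (y i) (u i) := by
    rw [← hi₁, ← hi₀, ← sum_pair hne (f := fun i => logisticLoss (y i) (u i))]
    exact sum_le_sum_of_subset_of_nonneg (subset_univ _) fun i _ _ =>
      logisticLoss_nonneg (hy i) _
  have hu₁ := abs_le.1 (abs_sum_mul_le_sum_abs_mul_norm (X i₁) β)
  have hu₀ := abs_le.1 (abs_sum_mul_le_sum_abs_mul_norm (X i₀) β)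
  have hC₁ : 0 ≤ (∑ j, |X i₁ j|) * ‖β‖ := by positivity
  have hC₀ : 0 ≤ (∑ j, |X i₀ j|) * ‖β‖ := by positivity
  have hℓ₁ := neg_le_logisticLoss_one (u i₁)
  have hℓ₀ := le_logisticLoss_zero (u i₀)
  have hℓ₁_nonneg := logisticLoss_nonneg (Or.inr rfl) (u i₁)
  have hℓ₀_nonneg := logisticLoss_nonneg (Or.inl rfl) (u i₀)
  rw [negLogLik_eq_sum_logisticLoss, sum_add_distrib, add_mul]
  gcongr
  refine le_trans ?_ hpair
  rcases abs_cases β0 with ⟨h, _⟩ | ⟨h, _⟩ <;> rw [h] <;> linarith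

lemma exists_pos_forall_le_of_forall_pos {ι : Type*} [Finite ι] {f : ι → ℝ}
    (hf : ∀ j, 0 < f j) : ∃ c, 0 < c ∧ ∀ j, c ≤ f j :=
  ((eventually_all.2 fun j => (eventually_lt_nhds (hf j)).filter_mono nhdsWithin_le_nhds).and
    (self_mem_nhdsWithin (a := (0 : ℝ)) (s := Set.Ioi 0))).exists.imp
    fun _ ⟨hle, hpos⟩ => ⟨hpos, fun j => (hle j).le⟩

lemma tendsto_cocompact_atTop_of_mul_norm_sub_le {E : Type*} [NormedAddCommGroup E]
    [ProperSpace E] {F : E → ℝ} {a K : ℝ} (ha : 0 < a) (hF : ∀ x, a * ‖x‖ - K ≤ F x) :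
    Tendsto F (cocompact E) atTop :=
  tendsto_atTop_mono hF <|
    tendsto_atTop_add_const_right _ (-K) (tendsto_norm_cocompact_atTop.const_mul_atTop ha)

lemma continuous_hObj (n p : ℕ) (X : Matrix (Fin n) (Fin p) ℝ) (y : Fin n → ℝ)
    (δ lam : ℝ) (t : Fin p → ℝ) :
    Continuous fun b : ℝ × (Fin p → ℝ) => hObj n p X y δ lam t b.1 b.2 := by
  unfold hObj negLogLik
  fun_prop (disch := intro; positivity)

lemma abs_sub_mul_norm_div_add_mul_sq_le_hObj {n p : ℕ} (X : Matrix (Fin n) (Fin p) ℝ)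
    {y : Fin n → ℝ} (hy : ∀ i, y i = 0 ∨ y i = 1) {i₁ i₀ : Fin n} (hi₁ : y i₁ = 1)
    (hi₀ : y i₀ = 0) {δ lam c : ℝ} (hlam : 0 ≤ lam) (hδ : 0 ≤ δ) (hc : 0 ≤ c)
    {t : Fin p → ℝ} (ht : ∀ j, |t j| ≤ 1) (htc : ∀ j, c ≤ 1 - t j ^ 2)
    (β0 : ℝ) (β : Fin p → ℝ) :
    (|β0| - (∑ j, (|X i₁ j| + |X i₀ j|)) * ‖β‖) / n + δ * c * ‖β‖ ^ 2
      ≤ hObj n p X y δ lam t β0 β := by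
  have hloss : (|β0| - (∑ j, (|X i₁ j| + |X i₀ j|)) * ‖β‖) / n
      ≤ negLogLik n p X y β0 (fun j => t j * β j) := by
    refine le_trans ?_ (abs_sub_mul_norm_div_le_negLogLik X hy hi₁ hi₀ β0 _)
    gcongr
    exact norm_mul_le_of_abs_le_one ht β
  have hridge : 0 ≤ lam * ∑ j, β j ^ 2 := by positivity
  have hpen : δ * c * ‖β‖ ^ 2 ≤ δ * ∑ j, (1 - t j ^ 2) * β j ^ 2 := by
    rw [mul_assoc]
    gcongr
    calc c * ‖β‖ ^ 2 ≤ c * ∑ j, β j ^ 2 := by gcongr; exact norm_sq_le_sum_sq β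
      _ = ∑ j, c * β j ^ 2 := mul_sum ..
      _ ≤ ∑ j, (1 - t j ^ 2) * β j ^ 2 := by gcongr with j; exact htc j
  rw [hObj]
  linarith

lemma tendsto_hObj_cocompact {n p : ℕ} (X : Matrix (Fin n) (Fin p) ℝ)
    {y : Fin n → ℝ} (hy : ∀ i, y i = 0 ∨ y i = 1) {i₁ i₀ : Fin n} (hi₁ : y i₁ = 1)
    (hi₀ : y i₀ = 0) {δ lam : ℝ} (hlam : 0 ≤ lam) (hδ : 0 < δ)
    {t : Fin p → ℝ} (ht : ∀ j, 0 < t j ∧ t j < 1) :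
    Tendsto (fun b : ℝ × (Fin p → ℝ) => hObj n p X y δ lam t b.1 b.2) (cocompact _) atTop := by
  obtain ⟨c, hc, htc⟩ := exists_pos_forall_le_of_forall_pos (f := fun j => 1 - t j ^ 2)
    fun j => by nlinarith [ht j]
  have hn : (0 : ℝ) < n := Nat.cast_pos.2 (Fin.pos i₁)
  set C := ∑ j, (|X i₁ j| + |X i₀ j|)
  set A := (C + 1) / n
  set e := δ * c
  have he : 0 < e := mul_pos hδ hc
  refine tendsto_cocompact_atTop_of_mul_norm_sub_le (a := 1 / n) (K := A ^ 2 / (4 * e))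
    (by positivity) fun ⟨β0, β⟩ => ?_
  have hbound := abs_sub_mul_norm_div_add_mul_sq_le_hObj X hy hi₁ hi₀ hlam hδ.le hc.le
    (fun j => abs_le.2 ⟨by linarith [ht j], (ht j).2.le⟩) htc β0 β
  have hparabola : A * ‖β‖ - e * ‖β‖ ^ 2 ≤ A ^ 2 / (4 * e) := by
    rw [le_div_iff₀ (by positivity)]
    nlinarith [sq_nonneg (2 * e * ‖β‖ - A)]
  have hnorm : ‖(β0, β)‖ ≤ |β0| + ‖β‖ := by
    rw [Prod.norm_def, Real.norm_eq_abs]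
    exact max_le_add_of_nonneg (abs_nonneg _) (norm_nonneg _)
  have hsplit : (|β0| - C * ‖β‖) / n = (|β0| + ‖β‖) / n - A * ‖β‖ := by
    simp only [A]; field_simp; ring
  calc 1 / n * ‖(β0, β)‖ - A ^ 2 / (4 * e) ≤ (|β0| + ‖β‖) / n - A ^ 2 / (4 * e) := by
        rw [one_div_mul_eq_div]; gcongr
    _ ≤ _ := by linarith

theorem stmt14_general (n p : ℕ)
    (X : Matrix (Fin n) (Fin p) ℝ) (y : Fin n → ℝ) (hy : ∀ i, y i = 0 ∨ y i = 1)
    (hy1 : ∃ i, y i = 1) (hy0 : ∃ i', y i' = 0)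
    (t : Fin p → ℝ) (ht : ∀ j, 0 < t j ∧ t j < 1)
    (lam δ : ℝ) (hlam : 0 ≤ lam) (hδ : 0 < δ) :
    ∃ b : ℝ × (Fin p → ℝ), hObj n p X y δ lam t b.1 b.2 = fVal n p X y δ lam t := by
  obtain ⟨i₁, hi₁⟩ := hy1
  obtain ⟨i₀, hi₀⟩ := hy0
  obtain ⟨b, hb⟩ := (continuous_hObj n p X y δ lam t).exists_forall_le
    (tendsto_hObj_cocompact X hy hi₁ hi₀ hlam hδ ht)
  have hleast : IsLeast (Set.range fun b : ℝ × (Fin p → ℝ) => hObj n p X y δ lam t b.1 b.2)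
      (hObj n p X y δ lam t b.1 b.2) := ⟨⟨b, rfl⟩, Set.forall_mem_range.2 hb⟩
  exact ⟨b, hleast.isGLB.ciInf_eq.symm⟩

/-- if the binary response is not constant, then for every interior
`t ∈ (0,1)^p`, `δ > 0` and `λ ≥ 0`, the function `(β₀, β) ↦ h_{δ,λ}(t, β₀, β)` attains
its infimum over `ℝ × ℝ^p`. -/
theorem stmt14 (n p : ℕ) (hn : 1 ≤ n) (hp : 1 ≤ p)
    (X : Matrix (Fin n) (Fin p) ℝ) (y : Fin n → ℝ) (hy : ∀ i, y i = 0 ∨ y i = 1)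
    (hy1 : ∃ i, y i = 1) (hy0 : ∃ i', y i' = 0)
    (t : Fin p → ℝ) (ht : ∀ j, 0 < t j ∧ t j < 1)
    (lam δ : ℝ) (hlam : 0 ≤ lam) (hδ : 0 < δ) :
    ∃ b : ℝ × (Fin p → ℝ), hObj n p X y δ lam t b.1 b.2 = fVal n p X y δ lam t :=
  stmt14_general n p X y hy hy1 hy0 t ht lam δ hlam hδ
end

section
/- At binary corners the relaxation is exact: for every s ∈ {0,1}^p, every δ > 0 and λ ≥ 0, the value function satisfies f_{δ,λ}(s) = inf over (β₀, β) ∈ ℝ × ℝ^p with β_j = 0 for every j with s_j = 0, of L(β₀, β) + λ ‖β‖₂². In other words, the relaxed objective evaluated at a binary selection vector s recovers exactly the ridge-penalized logistic fit restricted to the variables selected by s. -/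
/-!
Writing `β_j² = (t_j β_j)² + (1 - t_j²) β_j²` splits the relaxed objective as
`h(t, β₀, β) = L(β₀, t ⊙ β) + λ‖t ⊙ β‖² + (λ + δ) Σ_j (1 - t_j²) β_j²`.
At a binary `s` the last sum is nonnegative, so replacing `β` by `s ⊙ β` (which satisfies the
support constraint) never increases the objective, and on constrained `β` the relaxed objective
is exactly the ridge objective. Hence the two infima coincide.
-/

section RelaxedObjective

variable {n p : ℕ} (X : Matrix (Fin n) (Fin p) ℝ) (y : Fin n → ℝ) (δ lam : ℝ)

theorem hObj_eq_mask (t : Fin p → ℝ) (β0 : ℝ) (β : Fin p → ℝ) :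
    hObj n p X y δ lam t β0 β =
      negLogLik n p X y β0 (fun j => t j * β j) + lam * ∑ j, (t j * β j) ^ 2
        + (lam + δ) * ∑ j, (1 - t j ^ 2) * β j ^ 2 := by
  have hsplit : ∑ j, β j ^ 2 = ∑ j, (t j * β j) ^ 2 + ∑ j, (1 - t j ^ 2) * β j ^ 2 := by
    rw [← Finset.sum_add_distrib]
    exact Finset.sum_congr rfl fun j _ => by ring
  rw [hObj, hsplit]
  ring

theorem negLogLik_mask_add_le_hObj (hlamδ : 0 ≤ lam + δ) {t : Fin p → ℝ}
    (ht : ∀ j, t j ^ 2 ≤ 1) (β0 : ℝ) (β : Fin p → ℝ) :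
    negLogLik n p X y β0 (fun j => t j * β j) + lam * ∑ j, (t j * β j) ^ 2
      ≤ hObj n p X y δ lam t β0 β := by
  have hrest : 0 ≤ (lam + δ) * ∑ j, (1 - t j ^ 2) * β j ^ 2 :=
    mul_nonneg hlamδ <| Finset.sum_nonneg fun j _ =>
      mul_nonneg (sub_nonneg.mpr (ht j)) (sq_nonneg _)
  rw [hObj_eq_mask]
  linarith

theorem hObj_eq_of_support {s : Fin p → ℝ} (hs : ∀ j, s j = 0 ∨ s j = 1) (β0 : ℝ)
    {β : Fin p → ℝ} (hβ : ∀ j, s j = 0 → β j = 0) :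
    hObj n p X y δ lam s β0 β = negLogLik n p X y β0 β + lam * ∑ j, β j ^ 2 := by
  have hmask : (fun j => s j * β j) = β := by
    funext j
    rcases hs j with h | h
    · rw [h, zero_mul, hβ j h]
    · rw [h, one_mul]
  have hrest : ∑ j, (1 - s j ^ 2) * β j ^ 2 = 0 :=
    Finset.sum_eq_zero fun j _ => by
      rcases hs j with h | h
      · rw [hβ j h]; ring
      · rw [h]; ring
  rw [hObj, hmask, hrest]
  ring

end RelaxedObjective

theorem stmt17_general (n p : ℕ)
    (X : Matrix (Fin n) (Fin p) ℝ) (y : Fin n → ℝ)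
    (s : Fin p → ℝ) (hs : ∀ j, s j = 0 ∨ s j = 1)
    (lam δ : ℝ) (hlam : 0 ≤ lam) (hδ : 0 < δ) :
    fVal n p X y δ lam s
      = sInf ((fun b : ℝ × (Fin p → ℝ) =>
            negLogLik n p X y b.1 b.2 + lam * ∑ j, (b.2 j) ^ 2) ''
          {b : ℝ × (Fin p → ℝ) | ∀ j, s j = 0 → b.2 j = 0}) := by
  have hs_sq : ∀ j, s j ^ 2 ≤ 1 := fun j => by rcases hs j with h | h <;> simp [h]
  apply csInf_eq_csInf_of_forall_exists_le
  · rintro _ ⟨⟨β0, β⟩, rfl⟩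
    refine ⟨_, ⟨(β0, fun j => s j * β j), fun j hj => by simp [hj], rfl⟩, ?_⟩
    exact negLogLik_mask_add_le_hObj X y δ lam (by linarith) hs_sq β0 β
  · rintro _ ⟨⟨β0, β⟩, hβ, rfl⟩
    exact ⟨_, ⟨(β0, β), rfl⟩, (hObj_eq_of_support X y δ lam hs β0 hβ).le⟩

/-- at binary corners the relaxation is exact: for `s ∈ {0,1}^p`, `δ > 0`
and `λ ≥ 0`, `f_{δ,λ}(s)` equals the infimum of `L(β₀, β) + λ‖β‖₂²` over all `(β₀, β)`
with `β_j = 0` whenever `s_j = 0`. -/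
theorem stmt17 (n p : ℕ) (hn : 1 ≤ n) (hp : 1 ≤ p)
    (X : Matrix (Fin n) (Fin p) ℝ) (y : Fin n → ℝ) (hy : ∀ i, y i = 0 ∨ y i = 1)
    (s : Fin p → ℝ) (hs : ∀ j, s j = 0 ∨ s j = 1)
    (lam δ : ℝ) (hlam : 0 ≤ lam) (hδ : 0 < δ) :
    fVal n p X y δ lam s
      = sInf ((fun b : ℝ × (Fin p → ℝ) =>
            negLogLik n p X y b.1 b.2 + lam * ∑ j, (b.2 j) ^ 2) ''
          {b : ℝ × (Fin p → ℝ) | ∀ j, s j = 0 → b.2 j = 0}) :=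
  stmt17_general n p X y s hs lam δ hlam hδ
end
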